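/- arXiv:math/0408218 — 2 statements merged into one kernel-verified Lean document; each statement's English description precedes it below -/
import Mathlib

section
/- (Finite-dimensional Larson–Sweedler theorem, cointegral version.) Let A be a finite-dimensional associative unital algebra over ℂ with a comultiplication Δ. If there exists a faithful left cointegral h in A, then the linear maps T₁, T₂ : A ⊗ A → A ⊗ A determined by T₁(a ⊗ b) = Δ(a)(1 ⊗ b) and T₂(a ⊗ b) = (a ⊗ 1)Δ(b) are bijective, and (A, Δ) is a Hopf algebra: there exist a linear map ε : A → ℂ and a linear map S : A → A such that (ε ⊗ id)(Δ(a)) = a, (id ⊗ ε)(Δ(a)) = a, m(S ⊗ id)(Δ(a)) = ε(a)·1 and m(id ⊗ S)(Δ(a)) = ε(a)·1 for all a ∈ A, where m denotes the multiplication map A ⊗ A → A. -/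
/-!
Slicing the cointegral identity `Δ(a)(1 ⊗ h) = a ⊗ h` with `ω ⊗ id` gives
`(ω ⊗ id)(Δ a) · h ∈ ℂ h`; since the right leg of `Δ(h)` is `A`, this yields a functional `ε`
with `b h = ε(b) h`. The cointegral identity then reads `(id ⊗ ε) Δ = id`, and coassociativity
carries this over to `(ε ⊗ id) Δ = id` on the right leg of `Δ(h)`, which is `A`.
Applying `id ⊗ Δ` to the cointegral identity and slicing with `id ⊗ ω` puts
`a ⊗ (id ⊗ ω)(Δ h)` in the range of `T₁`, so `T₁` is onto, hence bijective.
`S a = (ε ⊗ id)(T₁⁻¹(a ⊗ 1))` is a left inverse of `id` in the convolution algebra `End(A)`;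
this algebra is finite-dimensional, so `S` is also a right inverse, and
`(c ⊗ 1)(S ⊗ id)(Δ d)` is a preimage of `c ⊗ d` under `T₂`.
-/

open TensorProduct

noncomputable section

variable {A : Type*} [Ring A] [Algebra ℂ A]

/-- The slice map `id ⊗ ω : A ⊗ A → A`. -/
def sliceR (ω : A →ₗ[ℂ] ℂ) : A ⊗[ℂ] A →ₗ[ℂ] A :=
  (TensorProduct.rid ℂ A).toLinearMap ∘ₗ TensorProduct.map LinearMap.id ω

/-- The slice map `ω ⊗ id : A ⊗ A → A`. -/
def sliceL (ω : A →ₗ[ℂ] ℂ) : A ⊗[ℂ] A →ₗ[ℂ] A :=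
  (TensorProduct.lid ℂ A).toLinearMap ∘ₗ TensorProduct.map ω LinearMap.id

/-- Coassociativity of a comultiplication `Δ : A → A ⊗ A`:
`(Δ ⊗ id) ∘ Δ = (id ⊗ Δ) ∘ Δ` (up to the associator). -/
def IsCoassoc (Δ : A →ₐ[ℂ] A ⊗[ℂ] A) : Prop :=
  ∀ a : A,
    TensorProduct.assoc ℂ A A A (TensorProduct.map Δ.toLinearMap LinearMap.id (Δ a)) =
      TensorProduct.map LinearMap.id Δ.toLinearMap (Δ a)

/-- A left integral: a nonzero functional with `(id ⊗ φ)(Δ a) = φ(a)·1` for all `a`. -/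
def IsLeftIntegral (Δ : A →ₐ[ℂ] A ⊗[ℂ] A) (φ : A →ₗ[ℂ] ℂ) : Prop :=
  φ ≠ 0 ∧ ∀ a : A, sliceR φ (Δ a) = φ a • (1 : A)

/-- A right integral: a nonzero functional with `(ψ ⊗ id)(Δ a) = ψ(a)·1` for all `a`. -/
def IsRightIntegral (Δ : A →ₐ[ℂ] A ⊗[ℂ] A) (ψ : A →ₗ[ℂ] ℂ) : Prop :=
  ψ ≠ 0 ∧ ∀ a : A, sliceL ψ (Δ a) = ψ a • (1 : A)

/-- A faithful functional: the bilinear form `(a, b) ↦ ω(ab)` is non-degenerate. -/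
def IsFaithful (ω : A →ₗ[ℂ] ℂ) : Prop :=
  (∀ b : A, (∀ a : A, ω (a * b) = 0) → b = 0) ∧
  (∀ b : A, (∀ a : A, ω (b * a) = 0) → b = 0)

/-- The left leg of an element `x ∈ A ⊗ A`: the span of `{(id ⊗ ω)(x) : ω ∈ A*}`. -/
def leftLegOf (x : A ⊗[ℂ] A) : Submodule ℂ A :=
  Submodule.span ℂ {y : A | ∃ ω : A →ₗ[ℂ] ℂ, y = sliceR ω x}

/-- The right leg of an element `x ∈ A ⊗ A`: the span of `{(ω ⊗ id)(x) : ω ∈ A*}`. -/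
def rightLegOf (x : A ⊗[ℂ] A) : Submodule ℂ A :=
  Submodule.span ℂ {y : A | ∃ ω : A →ₗ[ℂ] ℂ, y = sliceL ω x}

/-- The left leg of `Δ`: the span of `{(id ⊗ ω)(Δ a) : a ∈ A, ω ∈ A*}`. -/
def leftLeg (Δ : A →ₐ[ℂ] A ⊗[ℂ] A) : Submodule ℂ A :=
  Submodule.span ℂ {y : A | ∃ (a : A) (ω : A →ₗ[ℂ] ℂ), y = sliceR ω (Δ a)}

/-- The right leg of `Δ`: the span of `{(ω ⊗ id)(Δ a) : a ∈ A, ω ∈ A*}`. -/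
def rightLeg (Δ : A →ₐ[ℂ] A ⊗[ℂ] A) : Submodule ℂ A :=
  Submodule.span ℂ {y : A | ∃ (a : A) (ω : A →ₗ[ℂ] ℂ), y = sliceL ω (Δ a)}

/-- A comultiplication is full if both of its legs are all of `A`. -/
def IsFull (Δ : A →ₐ[ℂ] A ⊗[ℂ] A) : Prop :=
  leftLeg Δ = ⊤ ∧ rightLeg Δ = ⊤

/-- The linear map `T₁` with `T₁ (a ⊗ b) = Δ(a) * (1 ⊗ b)`. -/
def T1 (Δ : A →ₐ[ℂ] A ⊗[ℂ] A) : A ⊗[ℂ] A →ₗ[ℂ] A ⊗[ℂ] A :=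
  LinearMap.mul' ℂ (A ⊗[ℂ] A) ∘ₗ
    TensorProduct.map Δ.toLinearMap (TensorProduct.mk ℂ A A 1)

/-- The linear map `T₁'` with `T₁' (a ⊗ b) = Δ(a) * (b ⊗ 1)`. -/
def T1' (Δ : A →ₐ[ℂ] A ⊗[ℂ] A) : A ⊗[ℂ] A →ₗ[ℂ] A ⊗[ℂ] A :=
  LinearMap.mul' ℂ (A ⊗[ℂ] A) ∘ₗ
    TensorProduct.map Δ.toLinearMap ((TensorProduct.mk ℂ A A).flip 1)

/-- The linear map `T₂` with `T₂ (a ⊗ b) = (a ⊗ 1) * Δ(b)`. -/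
def T2 (Δ : A →ₐ[ℂ] A ⊗[ℂ] A) : A ⊗[ℂ] A →ₗ[ℂ] A ⊗[ℂ] A :=
  LinearMap.mul' ℂ (A ⊗[ℂ] A) ∘ₗ
    TensorProduct.map ((TensorProduct.mk ℂ A A).flip 1) Δ.toLinearMap

/-- The linear map `T₂'` with `T₂' (a ⊗ b) = (1 ⊗ a) * Δ(b)`. -/
def T2' (Δ : A →ₐ[ℂ] A ⊗[ℂ] A) : A ⊗[ℂ] A →ₗ[ℂ] A ⊗[ℂ] A :=
  LinearMap.mul' ℂ (A ⊗[ℂ] A) ∘ₗ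
    TensorProduct.map (TensorProduct.mk ℂ A A 1) Δ.toLinearMap

/-- A left cointegral: a nonzero element `h` with `Δ(a)(1 ⊗ h) = a ⊗ h` for all `a`. -/
def IsLeftCointegral (Δ : A →ₐ[ℂ] A ⊗[ℂ] A) (h : A) : Prop :=
  h ≠ 0 ∧ ∀ a : A, Δ a * ((1 : A) ⊗ₜ[ℂ] h) = a ⊗ₜ[ℂ] h

/-- A right cointegral: a nonzero element `k` with `(k ⊗ 1)Δ(a) = k ⊗ a` for all `a`. -/
def IsRightCointegral (Δ : A →ₐ[ℂ] A ⊗[ℂ] A) (k : A) : Prop :=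
  k ≠ 0 ∧ ∀ a : A, (k ⊗ₜ[ℂ] (1 : A)) * Δ a = k ⊗ₜ[ℂ] a

/-- `Δ₁₃(a) = (1 ⊗ σ)(Δ(a) ⊗ 1)`, viewed in `A ⊗ (A ⊗ A)`. -/
def delta13 (Δ : A →ₐ[ℂ] A ⊗[ℂ] A) (a : A) : A ⊗[ℂ] (A ⊗[ℂ] A) :=
  TensorProduct.map LinearMap.id (TensorProduct.comm ℂ A A).toLinearMap
    (TensorProduct.assoc ℂ A A A (Δ a ⊗ₜ[ℂ] (1 : A)))

@[simp]
lemma sliceR_tmul (ω : A →ₗ[ℂ] ℂ) (x y : A) : sliceR ω (x ⊗ₜ[ℂ] y) = ω y • x := by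
  simp [sliceR]

@[simp]
lemma sliceL_tmul (ω : A →ₗ[ℂ] ℂ) (x y : A) : sliceL ω (x ⊗ₜ[ℂ] y) = ω x • y := by
  simp [sliceL]

@[simp]
lemma T1_tmul (Δ : A →ₐ[ℂ] A ⊗[ℂ] A) (a b : A) :
    T1 Δ (a ⊗ₜ[ℂ] b) = Δ a * ((1 : A) ⊗ₜ[ℂ] b) := by
  simp [T1]

@[simp]
lemma T2_tmul (Δ : A →ₐ[ℂ] A ⊗[ℂ] A) (a b : A) :
    T2 Δ (a ⊗ₜ[ℂ] b) = (a ⊗ₜ[ℂ] (1 : A)) * Δ b := by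
  simp [T2]

lemma sliceR_tmul_mul (ω : A →ₗ[ℂ] ℂ) (y z : A) (t : A ⊗[ℂ] A) :
    sliceR ω ((y ⊗ₜ[ℂ] z) * t) = y * sliceR ω (((1 : A) ⊗ₜ[ℂ] z) * t) := by
  induction t using TensorProduct.induction_on with
  | zero => simp
  | tmul c d => simp
  | add t s ht hs => rw [mul_add, map_add, ht, hs, mul_add, map_add, mul_add]

lemma sliceL_mul_one_tmul (ω : A →ₗ[ℂ] ℂ) (u : A ⊗[ℂ] A) (b : A) :
    sliceL ω (u * ((1 : A) ⊗ₜ[ℂ] b)) = sliceL ω u * b := by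
  induction u using TensorProduct.induction_on with
  | zero => simp
  | tmul x y => simp
  | add u v hu hv => rw [add_mul, map_add, hu, hv, map_add, add_mul]

lemma T1_mul_one_tmul (Δ : A →ₐ[ℂ] A ⊗[ℂ] A) (u : A ⊗[ℂ] A) (y : A) :
    T1 Δ (u * ((1 : A) ⊗ₜ[ℂ] y)) = T1 Δ u * ((1 : A) ⊗ₜ[ℂ] y) := by
  induction u using TensorProduct.induction_on with
  | zero => simp
  | tmul x z => simp [mul_assoc]
  | add u v hu hv => rw [add_mul, map_add, hu, hv, map_add, add_mul]

lemma T2_tmul_one_mul (Δ : A →ₐ[ℂ] A ⊗[ℂ] A) (x : A) (u : A ⊗[ℂ] A) :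
    T2 Δ ((x ⊗ₜ[ℂ] (1 : A)) * u) = (x ⊗ₜ[ℂ] (1 : A)) * T2 Δ u := by
  induction u using TensorProduct.induction_on with
  | zero => simp
  | tmul c d => simp [← mul_assoc]
  | add u v hu hv => rw [mul_add, map_add, hu, hv, map_add, mul_add]

lemma TensorProduct.tmul_left_injective_of_ne_zero {K V W : Type*} [Field K] [AddCommGroup V]
    [Module K V] [AddCommGroup W] [Module K W] {w : W} (hw : w ≠ 0) :
    Function.Injective fun v : V => v ⊗ₜ[K] w := by
  obtain ⟨φ, hφ⟩ : ∃ φ : Module.Dual K W, φ w ≠ 0 := by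
    by_contra! H
    exact hw ((Module.forall_dual_apply_eq_zero_iff K w).1 H)
  refine Function.LeftInverse.injective
    (g := fun t => (φ w)⁻¹ • TensorProduct.rid K V (φ.lTensor V t)) fun v => ?_
  simp [smul_smul, inv_mul_cancel₀ hφ]

lemma leftLegOf_le_iff {x : A ⊗[ℂ] A} {p : Submodule ℂ A} :
    leftLegOf x ≤ p ↔ ∀ ω, sliceR ω x ∈ p := by
  simp [leftLegOf, Submodule.span_le, Set.subset_def]

lemma rightLegOf_le_iff {x : A ⊗[ℂ] A} {p : Submodule ℂ A} :
    rightLegOf x ≤ p ↔ ∀ ω, sliceL ω x ∈ p := by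
  simp [rightLegOf, Submodule.span_le, Set.subset_def]

lemma lTensor_sliceL_assoc (ω : A →ₗ[ℂ] ℂ) (t : (A ⊗[ℂ] A) ⊗[ℂ] A) :
    (sliceL ω).lTensor A (TensorProduct.assoc ℂ A A A t) = (sliceR ω).rTensor A t := by
  have : (sliceL ω).lTensor A ∘ₗ (TensorProduct.assoc ℂ A A A).toLinearMap =
      (sliceR ω).rTensor A := by
    ext x y z
    simp [smul_tmul']
  exact LinearMap.congr_fun this t

lemma sliceL_lTensor (ω : A →ₗ[ℂ] ℂ) (g : A →ₗ[ℂ] A) (t : A ⊗[ℂ] A) :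
    sliceL ω (g.lTensor A t) = g (sliceL ω t) := by
  have : sliceL ω ∘ₗ g.lTensor A = g ∘ₗ sliceL ω := by
    ext x y
    simp
  exact LinearMap.congr_fun this t

lemma IsCoassoc.lTensor_comul {Δ : A →ₐ[ℂ] A ⊗[ℂ] A} (hΔ : IsCoassoc Δ) (a : A) :
    Δ.toLinearMap.lTensor A (Δ a) =
      TensorProduct.assoc ℂ A A A (Δ.toLinearMap.rTensor A (Δ a)) :=
  (hΔ a).symm

section Counit

variable {Δ : A →ₐ[ℂ] A ⊗[ℂ] A} {h : A} {ε : A →ₗ[ℂ] ℂ}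

lemma IsLeftCointegral.sliceL_comul_mul (hh : IsLeftCointegral Δ h) (ω : A →ₗ[ℂ] ℂ) (a : A) :
    sliceL ω (Δ a) * h = ω a • h := by
  rw [← sliceL_mul_one_tmul, hh.2 a, sliceL_tmul]

lemma IsLeftCointegral.exists_mul_eq_smul (hh : IsLeftCointegral Δ h)
    (hR : rightLegOf (Δ h) = ⊤) : ∃ ε : A →ₗ[ℂ] ℂ, ∀ b, b * h = ε b • h := by
  have hmem : ∀ b, b * h ∈ ℂ ∙ h := by
    have : rightLegOf (Δ h) ≤ (ℂ ∙ h).comap (LinearMap.mulRight ℂ h) :=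
      rightLegOf_le_iff.2 fun ω => by
        simp [hh.sliceL_comul_mul, Submodule.smul_mem, Submodule.mem_span_singleton_self]
    rw [hR] at this
    exact fun b => this trivial
  let e := LinearEquiv.toSpanNonzeroSingleton ℂ A h hh.1
  refine ⟨e.symm ∘ₗ (LinearMap.mulRight ℂ h).codRestrict _ hmem, fun b => ?_⟩
  exact (congrArg Subtype.val (e.apply_symm_apply ⟨b * h, hmem b⟩)).symm

lemma IsLeftCointegral.sliceR_comul (hh : IsLeftCointegral Δ h) (hε : ∀ b, b * h = ε b • h)
    (a : A) : sliceR ε (Δ a) = a := by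
  have key : ∀ u : A ⊗[ℂ] A, u * ((1 : A) ⊗ₜ[ℂ] h) = sliceR ε u ⊗ₜ[ℂ] h := by
    intro u
    induction u using TensorProduct.induction_on with
    | zero => simp
    | tmul x y => simp [hε, smul_tmul']
    | add u v hu hv => rw [add_mul, hu, hv, map_add, add_tmul]
  exact TensorProduct.tmul_left_injective_of_ne_zero (K := ℂ) hh.1 (by simp only [← key, hh.2])

lemma sliceL_comul_sliceL_comul (hΔ : IsCoassoc Δ) (hRC : ∀ a, sliceR ε (Δ a) = a)
    (ω : A →ₗ[ℂ] ℂ) (x : A) : sliceL ε (Δ (sliceL ω (Δ x))) = sliceL ω (Δ x) := by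
  have hRC' : sliceR ε ∘ₗ Δ.toLinearMap = LinearMap.id := LinearMap.ext hRC
  have : (sliceL ε ∘ₗ Δ.toLinearMap).lTensor A (Δ x) = Δ x := by
    rw [LinearMap.lTensor_comp_apply, hΔ.lTensor_comul, lTensor_sliceL_assoc,
      ← LinearMap.rTensor_comp_apply, hRC', LinearMap.rTensor_id_apply]
  conv_rhs => rw [← this]
  rw [sliceL_lTensor]
  rfl

lemma sliceL_comul_of_rightLegOf_eq_top (hΔ : IsCoassoc Δ) (hRC : ∀ a, sliceR ε (Δ a) = a)
    (hR : rightLegOf (Δ h) = ⊤) (b : A) : sliceL ε (Δ b) = b := by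
  have : rightLegOf (Δ h) ≤ LinearMap.eqLocus (sliceL ε ∘ₗ Δ.toLinearMap) LinearMap.id :=
    rightLegOf_le_iff.2 fun ω => sliceL_comul_sliceL_comul hΔ hRC ω h
  rw [hR] at this
  exact this trivial

end Counit

section T1

variable {Δ : A →ₐ[ℂ] A ⊗[ℂ] A}

lemma T1_lTensor_sliceR_mul (ω : A →ₗ[ℂ] ℂ) (t v : A ⊗[ℂ] A) :
    T1 Δ ((sliceR ω ∘ₗ LinearMap.mulRight ℂ t ∘ₗ TensorProduct.mk ℂ A A 1).lTensor A v) =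
      (sliceR ω).lTensor A
        (TensorProduct.assoc ℂ A A A (Δ.toLinearMap.rTensor A v) * ((1 : A) ⊗ₜ[ℂ] t)) := by
  induction v using TensorProduct.induction_on with
  | zero => simp
  | add v w hv hw => simp only [map_add, add_mul, hv, hw]
  | tmul p z =>
    simp only [LinearMap.lTensor_tmul, LinearMap.rTensor_tmul, T1_tmul, AlgHom.toLinearMap_apply]
    induction Δ p using TensorProduct.induction_on with
    | zero => simp
    | add s s' hs hs' => simp only [add_mul, add_tmul, map_add, hs, hs']
    | tmul x y =>
      rw [assoc_tmul, Algebra.TensorProduct.tmul_mul_tmul, Algebra.TensorProduct.tmul_mul_tmul,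
        LinearMap.lTensor_tmul, sliceR_tmul_mul]
      rfl

lemma IsLeftCointegral.tmul_sliceR_mem_range_T1 (hΔ : IsCoassoc Δ) {h : A}
    (hh : IsLeftCointegral Δ h) (a : A) (ω : A →ₗ[ℂ] ℂ) :
    a ⊗ₜ[ℂ] sliceR ω (Δ h) ∈ LinearMap.range (T1 Δ) := by
  have hco : Δ.toLinearMap.lTensor A (Δ a) * ((1 : A) ⊗ₜ[ℂ] Δ h) = a ⊗ₜ[ℂ] Δ h := by
    calc Δ.toLinearMap.lTensor A (Δ a) * ((1 : A) ⊗ₜ[ℂ] Δ h)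
        = Algebra.TensorProduct.map (AlgHom.id ℂ A) Δ (Δ a * ((1 : A) ⊗ₜ[ℂ] h)) := by
          rw [map_mul, Algebra.TensorProduct.map_tmul, map_one]; rfl
      _ = a ⊗ₜ[ℂ] Δ h := by rw [hh.2 a, Algebra.TensorProduct.map_tmul]; rfl
  refine ⟨_, (T1_lTensor_sliceR_mul ω (Δ h) (Δ a)).trans ?_⟩
  rw [← hΔ.lTensor_comul, hco, LinearMap.lTensor_tmul]

lemma IsLeftCointegral.surjective_T1 (hΔ : IsCoassoc Δ) {h : A} (hh : IsLeftCointegral Δ h)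
    (hL : leftLegOf (Δ h) = ⊤) : Function.Surjective (T1 Δ) := by
  rw [← LinearMap.range_eq_top, eq_top_iff]
  calc ⊤ = Submodule.map₂ (TensorProduct.mk ℂ A A) ⊤ (leftLegOf (Δ h)) := by
        rw [hL, map₂_mk_top_top_eq_top]
    _ ≤ LinearMap.range (T1 Δ) := Submodule.map₂_le.2 fun a _ x hx =>
        leftLegOf_le_iff (p := (LinearMap.range (T1 Δ)).comap (TensorProduct.mk ℂ A A a)).2
          (hh.tmul_sliceR_mem_range_T1 hΔ a) hx

end T1

section Antipode

variable {Δ : A →ₐ[ℂ] A ⊗[ℂ] A}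

def antipodeOfBijective (hT1 : Function.Bijective (T1 Δ)) (ε : A →ₗ[ℂ] ℂ) : A →ₗ[ℂ] A :=
  sliceL ε ∘ₗ (LinearEquiv.ofBijective (T1 Δ) hT1).symm.toLinearMap ∘ₗ
    (TensorProduct.mk ℂ A A).flip 1

variable (hT1 : Function.Bijective (T1 Δ)) (ε : A →ₗ[ℂ] ℂ)

lemma ofBijective_T1_symm_mul_one_tmul (u : A ⊗[ℂ] A) (y : A) :
    (LinearEquiv.ofBijective (T1 Δ) hT1).symm (u * ((1 : A) ⊗ₜ[ℂ] y)) =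
      (LinearEquiv.ofBijective (T1 Δ) hT1).symm u * ((1 : A) ⊗ₜ[ℂ] y) := by
  set e := LinearEquiv.ofBijective (T1 Δ) hT1
  rw [e.symm_apply_eq]
  change _ = T1 Δ (e.symm u * _)
  rw [T1_mul_one_tmul]
  exact congrArg (· * _) (e.apply_symm_apply u).symm

lemma mul'_map_antipodeOfBijective_id (u : A ⊗[ℂ] A) :
    LinearMap.mul' ℂ A (TensorProduct.map (antipodeOfBijective hT1 ε) LinearMap.id u) =
      sliceL ε ((LinearEquiv.ofBijective (T1 Δ) hT1).symm u) := by
  induction u using TensorProduct.induction_on with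
  | zero => simp
  | add u v hu hv => rw [map_add, map_add, hu, hv, map_add, map_add]
  | tmul x y =>
    have hxy : x ⊗ₜ[ℂ] y = (x ⊗ₜ[ℂ] (1 : A)) * ((1 : A) ⊗ₜ[ℂ] y) := by simp
    rw [map_tmul, LinearMap.mul'_apply, hxy, ofBijective_T1_symm_mul_one_tmul,
      sliceL_mul_one_tmul]
    rfl

lemma mul'_map_antipodeOfBijective_id_comul (a : A) :
    LinearMap.mul' ℂ A (TensorProduct.map (antipodeOfBijective hT1 ε) LinearMap.id (Δ a)) =
      ε a • (1 : A) := by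
  have hΔa : Δ a = T1 Δ (a ⊗ₜ[ℂ] (1 : A)) := by simp [← Algebra.TensorProduct.one_def]
  rw [mul'_map_antipodeOfBijective_id, hΔa, LinearEquiv.ofBijective_symm_apply_apply,
    sliceL_tmul]

end Antipode

@[reducible]
def coalgebraOfCounit (Δ : A →ₐ[ℂ] A ⊗[ℂ] A) (hΔ : IsCoassoc Δ) (ε : A →ₗ[ℂ] ℂ)
    (hL : ∀ a, sliceL ε (Δ a) = a) (hR : ∀ a, sliceR ε (Δ a) = a) : Coalgebra ℂ A where
  comul := Δ.toLinearMap
  counit := ε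
  coassoc := LinearMap.ext hΔ
  rTensor_counit_comp_comul := LinearMap.ext fun a =>
    (TensorProduct.lid ℂ A).injective ((hL a).trans (by simp))
  lTensor_counit_comp_comul := LinearMap.ext fun a =>
    (TensorProduct.rid ℂ A).injective ((hR a).trans (by simp))

lemma mul'_map_id_comul_of_mul'_map_comul [FiniteDimensional ℂ A] {Δ : A →ₐ[ℂ] A ⊗[ℂ] A}
    (hΔ : IsCoassoc Δ) {ε : A →ₗ[ℂ] ℂ} (hL : ∀ a, sliceL ε (Δ a) = a)
    (hR : ∀ a, sliceR ε (Δ a) = a) {S : A →ₗ[ℂ] A}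
    (hS : ∀ a, LinearMap.mul' ℂ A (TensorProduct.map S LinearMap.id (Δ a)) = ε a • (1 : A))
    (a : A) : LinearMap.mul' ℂ A (TensorProduct.map LinearMap.id S (Δ a)) = ε a • (1 : A) := by
  let := coalgebraOfCounit Δ hΔ ε hL hR
  have : Module.Finite ℂ (WithConv (A →ₗ[ℂ] A)) :=
    .equiv (WithConv.linearEquiv (R := ℂ) (A := A →ₗ[ℂ] A)).symm
  -- Artinian rings are Dedekind-finite, which is what `mul_eq_one_comm` needs.
  have : IsArtinianRing (WithConv (A →ₗ[ℂ] A)) := .of_finite ℂ _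
  have hS' : WithConv.toConv S * WithConv.toConv LinearMap.id = (1 : WithConv (A →ₗ[ℂ] A)) := by
    ext a
    rw [LinearMap.convMul_apply, LinearMap.convOne_apply, Algebra.algebraMap_eq_smul_one]
    exact hS a
  have := congrArg (fun f : WithConv (A →ₗ[ℂ] A) => f a) (mul_eq_one_comm.1 hS')
  rwa [LinearMap.convMul_apply, LinearMap.convOne_apply, Algebra.algebraMap_eq_smul_one] at this

section T2

variable {Δ : A →ₐ[ℂ] A ⊗[ℂ] A} {ε : A →ₗ[ℂ] ℂ} {S : A →ₗ[ℂ] A}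

lemma T2_map_comul (hΔ : IsCoassoc Δ) (hL : ∀ a, sliceL ε (Δ a) = a)
    (hS : ∀ a, LinearMap.mul' ℂ A (TensorProduct.map S LinearMap.id (Δ a)) = ε a • (1 : A))
    (b : A) : T2 Δ (TensorProduct.map S LinearMap.id (Δ b)) = (1 : A) ⊗ₜ[ℂ] b := by
  let Q : A ⊗[ℂ] (A ⊗[ℂ] A) →ₗ[ℂ] A ⊗[ℂ] A :=
    LinearMap.mul' ℂ (A ⊗[ℂ] A) ∘ₗ (((TensorProduct.mk ℂ A A).flip 1 ∘ₗ S).rTensor _)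
  have hT2 : T2 Δ ∘ₗ TensorProduct.map S LinearMap.id = Q ∘ₗ Δ.toLinearMap.lTensor A := by
    ext x y
    simp [Q]
  have hQ : ∀ t, Q (TensorProduct.assoc ℂ A A A t) =
      (LinearMap.mul' ℂ A ∘ₗ TensorProduct.map S LinearMap.id).rTensor A t :=
    LinearMap.congr_fun (f := Q ∘ₗ (TensorProduct.assoc ℂ A A A).toLinearMap) (by
      ext x y z
      simp [Q])
  have hS' : LinearMap.mul' ℂ A ∘ₗ TensorProduct.map S LinearMap.id ∘ₗ Δ.toLinearMap =
      LinearMap.toSpanSingleton ℂ A 1 ∘ₗ ε := LinearMap.ext hS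
  have hcounit : (LinearMap.toSpanSingleton ℂ A 1 ∘ₗ ε).rTensor A =
      TensorProduct.mk ℂ A A 1 ∘ₗ sliceL ε := by
    ext x y
    simp [smul_tmul]
  calc T2 Δ (TensorProduct.map S LinearMap.id (Δ b))
      = Q (TensorProduct.assoc ℂ A A A (Δ.toLinearMap.rTensor A (Δ b))) := by
        rw [← hΔ.lTensor_comul, ← LinearMap.comp_apply, hT2]; rfl
    _ = (1 : A) ⊗ₜ[ℂ] sliceL ε (Δ b) := by
        rw [hQ, ← LinearMap.rTensor_comp_apply, LinearMap.comp_assoc, hS', hcounit]; rfl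
    _ = (1 : A) ⊗ₜ[ℂ] b := by rw [hL]

lemma surjective_T2 (hΔ : IsCoassoc Δ) (hL : ∀ a, sliceL ε (Δ a) = a)
    (hS : ∀ a, LinearMap.mul' ℂ A (TensorProduct.map S LinearMap.id (Δ a)) = ε a • (1 : A)) :
    Function.Surjective (T2 Δ) := by
  rw [← LinearMap.range_eq_top, eq_top_iff]
  rintro w -
  induction w using TensorProduct.induction_on with
  | zero => exact zero_mem _
  | add v w hv hw => exact add_mem hv hw
  | tmul c b =>
    refine ⟨(c ⊗ₜ[ℂ] (1 : A)) * TensorProduct.map S LinearMap.id (Δ b), ?_⟩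
    rw [T2_tmul_one_mul, T2_map_comul hΔ hL hS, Algebra.TensorProduct.tmul_mul_tmul, mul_one,
      one_mul]

end T2

/-- Finite-dimensional Larson-Sweedler theorem (cointegral version): if `A` is
finite-dimensional and there is a faithful left cointegral, then `T₁` and `T₂` are bijective
and `(A, Δ)` is a Hopf algebra. -/
theorem larson_sweedler_finite_dimensional_cointegral
    [FiniteDimensional ℂ A]
    (Δ : A →ₐ[ℂ] A ⊗[ℂ] A) (hΔ : IsCoassoc Δ)
    (h : A) (hh : IsLeftCointegral Δ h)
    (hhf : leftLegOf (Δ h) = ⊤ ∧ rightLegOf (Δ h) = ⊤) :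
    (Function.Bijective (T1 Δ) ∧ Function.Bijective (T2 Δ)) ∧
    ∃ (ε : A →ₗ[ℂ] ℂ) (S : A →ₗ[ℂ] A), ∀ a : A,
      sliceL ε (Δ a) = a ∧ sliceR ε (Δ a) = a ∧
      LinearMap.mul' ℂ A (TensorProduct.map S LinearMap.id (Δ a)) = ε a • (1 : A) ∧
      LinearMap.mul' ℂ A (TensorProduct.map LinearMap.id S (Δ a)) = ε a • (1 : A) := by
  obtain ⟨hL, hR⟩ := hhf
  obtain ⟨ε, hε⟩ := hh.exists_mul_eq_smul hR
  have hRC : ∀ a, sliceR ε (Δ a) = a := hh.sliceR_comul hε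
  have hLC : ∀ a, sliceL ε (Δ a) = a := sliceL_comul_of_rightLegOf_eq_top hΔ hRC hR
  have hT1 := hh.surjective_T1 hΔ hL
  replace hT1 : Function.Bijective (T1 Δ) := ⟨LinearMap.injective_iff_surjective.2 hT1, hT1⟩
  have hS := mul'_map_antipodeOfBijective_id_comul hT1 ε
  have hT2 := surjective_T2 hΔ hLC hS
  exact ⟨⟨hT1, LinearMap.injective_iff_surjective.2 hT2, hT2⟩, ε, antipodeOfBijective hT1 ε,
    fun a => ⟨hLC a, hRC a, hS a, mul'_map_id_comul_of_mul'_map_comul hΔ hLC hRC hS a⟩⟩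
end
end

section
/- Let A be a Hopf algebra over ℂ with comultiplication Δ, counit ε and antipode S, and let h ∈ A be a left cointegral, i.e. a nonzero element with a·h = ε(a)·h for all a ∈ A. Then (1 ⊗ a)Δ(h) = (S(a) ⊗ 1)Δ(h) for all a ∈ A. -/
open TensorProduct

noncomputable section

variable {A : Type*} [Ring A] [Algebra ℂ A]

/-- In a Hopf algebra with a left cointegral `h` (i.e. `a·h = ε(a)·h` for all `a`), one has
`(1 ⊗ a)Δ(h) = (S(a) ⊗ 1)Δ(h)` for all `a`. -/
theorem left_cointegral_antipode_formula
    (Δ : A →ₐ[ℂ] A ⊗[ℂ] A) (hΔ : IsCoassoc Δ)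
    (ε : A →ₗ[ℂ] ℂ) (S : A →ₗ[ℂ] A)
    (hεl : ∀ a : A, sliceL ε (Δ a) = a) (hεr : ∀ a : A, sliceR ε (Δ a) = a)
    (hSl : ∀ a : A,
      LinearMap.mul' ℂ A (TensorProduct.map S LinearMap.id (Δ a)) = ε a • (1 : A))
    (hSr : ∀ a : A,
      LinearMap.mul' ℂ A (TensorProduct.map LinearMap.id S (Δ a)) = ε a • (1 : A))
    (h : A) (hne : h ≠ 0) (hcoint : ∀ a : A, a * h = ε a • h) :
    ∀ a : A, ((1 : A) ⊗ₜ[ℂ] a) * Δ h = (S a ⊗ₜ[ℂ] (1 : A)) * Δ h := by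
  classical
  -- Auxiliary map H : b ⊗ (c ⊗ d) ↦ (S b * c) ⊗ d
  set H : A ⊗[ℂ] (A ⊗[ℂ] A) →ₗ[ℂ] A ⊗[ℂ] A :=
    (TensorProduct.map (LinearMap.mul' ℂ A ∘ₗ TensorProduct.map S LinearMap.id) LinearMap.id)
      ∘ₗ (TensorProduct.assoc ℂ A A A).symm.toLinearMap with hHdef
  have hH : ∀ (b : A) (z : A ⊗[ℂ] A), H (b ⊗ₜ[ℂ] z) = (S b ⊗ₜ[ℂ] (1 : A)) * z := by
    intro b z
    induction z using TensorProduct.induction_on with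
    | zero => simp only [TensorProduct.tmul_zero, map_zero, mul_zero]
    | tmul c d =>
        simp [hHdef, Algebra.TensorProduct.tmul_mul_tmul]
    | add x y hx hy =>
        simp only [TensorProduct.tmul_add, map_add, hx, hy, mul_add]
  have hH2 : ∀ (z : A ⊗[ℂ] A) (c : A),
      H ((TensorProduct.assoc ℂ A A A) (z ⊗ₜ[ℂ] c)) =
        (LinearMap.mul' ℂ A (TensorProduct.map S LinearMap.id z)) ⊗ₜ[ℂ] c := by
    intro z c
    induction z using TensorProduct.induction_on with
    | zero =>
        simp only [TensorProduct.zero_tmul, LinearEquiv.map_zero, LinearMap.map_zero]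
    | tmul b b' => simp [hHdef]
    | add x y hx hy =>
        simp only [TensorProduct.add_tmul, map_add, hx, hy]
  -- Φ : b ⊗ c ↦ (S b ⊗ 1) * Δ c
  set Φ : A ⊗[ℂ] A →ₗ[ℂ] A ⊗[ℂ] A :=
    LinearMap.mul' ℂ (A ⊗[ℂ] A) ∘ₗ
      TensorProduct.map (((TensorProduct.mk ℂ A A).flip 1) ∘ₗ S) Δ.toLinearMap with hΦdef
  have key1 : Φ = H ∘ₗ TensorProduct.map LinearMap.id Δ.toLinearMap := by
    apply TensorProduct.ext'
    intro b c
    simp [hΦdef, hH]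
  have key2 : (H ∘ₗ (TensorProduct.assoc ℂ A A A).toLinearMap ∘ₗ
      TensorProduct.map Δ.toLinearMap LinearMap.id) =
      (TensorProduct.mk ℂ A A 1) ∘ₗ sliceL ε := by
    apply TensorProduct.ext'
    intro b c
    have : H ((TensorProduct.assoc ℂ A A A) ((Δ b) ⊗ₜ[ℂ] c)) =
        (LinearMap.mul' ℂ A (TensorProduct.map S LinearMap.id (Δ b))) ⊗ₜ[ℂ] c := hH2 _ _
    simp only [LinearMap.comp_apply, TensorProduct.map_tmul, LinearMap.id_coe, id_eq,
      LinearEquiv.coe_coe, AlgHom.toLinearMap_apply, this, hSl b]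
    simp only [sliceL, LinearMap.comp_apply, TensorProduct.map_tmul, LinearMap.id_coe, id_eq,
      LinearEquiv.coe_coe, TensorProduct.lid_tmul, TensorProduct.mk_apply]
    rw [TensorProduct.smul_tmul]
  have hΦa : ∀ a : A, Φ (Δ a) = (1 : A) ⊗ₜ[ℂ] a := by
    intro a
    have e1 : Φ (Δ a) = H (TensorProduct.map LinearMap.id Δ.toLinearMap (Δ a)) := by
      rw [key1]; rfl
    rw [e1, ← hΔ a]
    have e2 := LinearMap.congr_fun key2 (Δ a)
    simp only [LinearMap.comp_apply, LinearEquiv.coe_coe] at e2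
    rw [e2, hεl a]
    rfl
  -- Ψ : b ⊗ c ↦ ε c • ((S b ⊗ 1) * Δ h)
  set Ψ : A ⊗[ℂ] A →ₗ[ℂ] A ⊗[ℂ] A :=
    LinearMap.mulRight ℂ (Δ h) ∘ₗ ((TensorProduct.mk ℂ A A).flip 1) ∘ₗ S ∘ₗ sliceR ε
    with hΨdef
  have key3 : (LinearMap.mulRight ℂ (Δ h)) ∘ₗ Φ = Ψ := by
    apply TensorProduct.ext'
    intro b c
    simp only [hΦdef, hΨdef, LinearMap.comp_apply, TensorProduct.map_tmul,
      AlgHom.toLinearMap_apply, LinearMap.mul'_apply, LinearMap.mulRight_apply,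
      LinearMap.flip_apply, TensorProduct.mk_apply]
    rw [mul_assoc, ← map_mul, hcoint c, map_smul]
    simp only [sliceR, LinearMap.comp_apply, TensorProduct.map_tmul, LinearMap.id_coe, id_eq,
      LinearEquiv.coe_coe, TensorProduct.rid_tmul, map_smul, TensorProduct.smul_tmul',
      mul_smul_comm]
    rw [← TensorProduct.smul_tmul', smul_mul_assoc]
  intro a
  have e3 := LinearMap.congr_fun key3 (Δ a)
  simp only [LinearMap.comp_apply, LinearMap.mulRight_apply] at e3
  rw [← hΦa a] at *
  rw [e3, hΨdef]
  simp only [LinearMap.comp_apply, hεr a, LinearMap.mulRight_apply, LinearMap.flip_apply,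
    TensorProduct.mk_apply]
end
end
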